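/- arXiv:2507.09853 — 2 statements merged into one kernel-verified Lean document; each statement's English description precedes it below -/
import Mathlib

section
/- For real numbers a, b ∈ ℝ, γ > 0, L > 1, and p > 1, there is a constant C depending only on p such that |a_L^{1+γ} - b_L^{1+γ}|^p ≤ C (1 + pγ)^{p-1} |a-b|^{p-2}(a-b) (a_L^{1+pγ} - b_L^{1+pγ}), where for t ∈ ℝ and δ > 0 we set t_L^{1+δ} := t · min{|t|, L}^δ. -/
/-- Truncated signed power: `t_L^{1+δ} := t · (min |t| L)^δ`. -/
noncomputable def truncPow (L δ t : ℝ) : ℝ := t * (min |t| L) ^ δ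

open Set Filter Real MeasureTheory intervalIntegral

noncomputable def truncD (L δ t : ℝ) : ℝ :=
  if -L ≤ t ∧ t < L then (1 + δ) * |t| ^ δ else L ^ δ

lemma hasDerivAt_mul_abs_rpow {δ : ℝ} (hδ : 0 < δ) (t : ℝ) :
    HasDerivAt (fun s : ℝ => s * |s| ^ δ) ((1 + δ) * |t| ^ δ) t := by
  rcases lt_trichotomy t 0 with ht | rfl | ht
  · -- t < 0 : locally f s = s * (-s)^δ
    have hne : (-t : ℝ) ≠ 0 := by linarith
    have h1 : HasDerivAt (fun s : ℝ => (-s) ^ δ) (δ * (-t) ^ (δ - 1) * (-1)) t :=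
      (Real.hasDerivAt_rpow_const (Or.inl hne)).comp t (hasDerivAt_neg t)
    have h2 : HasDerivAt (fun s : ℝ => s * (-s) ^ δ)
        (1 * (-t) ^ δ + t * (δ * (-t) ^ (δ - 1) * (-1))) t :=
      (hasDerivAt_id t).mul h1
    have hkey : (-t) * (-t) ^ (δ - 1) = (-t) ^ δ := by
      have h : (-t) ^ δ = (-t) ^ (1 : ℝ) * (-t) ^ (δ - 1) := by
        rw [← Real.rpow_add (by linarith)]; norm_num
      rw [h, Real.rpow_one]
    have heq : (1 : ℝ) * (-t) ^ δ + t * (δ * (-t) ^ (δ - 1) * (-1)) = (1 + δ) * |t| ^ δ := by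
      rw [abs_of_neg ht]
      nlinarith [hkey]
    rw [heq] at h2
    refine h2.congr_of_eventuallyEq ?_
    filter_upwards [Iio_mem_nhds ht] with s hs
    rw [abs_of_neg hs]
  · -- t = 0
    have h0 : (1 + δ) * |(0 : ℝ)| ^ δ = 0 := by
      rw [abs_zero, Real.zero_rpow hδ.ne', mul_zero]
    rw [h0]
    rw [hasDerivAt_iff_tendsto_slope]
    have hcont : Filter.Tendsto (fun s : ℝ => |s| ^ δ) (nhds 0) (nhds 0) := by
      have := ((Real.continuous_rpow_const hδ.le).comp continuous_abs).tendsto 0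
      simpa [Function.comp_def, Real.zero_rpow hδ.ne'] using this
    refine (hcont.mono_left nhdsWithin_le_nhds).congr' ?_
    filter_upwards [self_mem_nhdsWithin] with s hs
    have hs' : s ≠ 0 := hs
    rw [slope_def_field]
    field_simp
    simp
  · -- t > 0
    have h1 : HasDerivAt (fun s : ℝ => s ^ δ) (δ * t ^ (δ - 1)) t :=
      Real.hasDerivAt_rpow_const (Or.inl ht.ne')
    have h2 : HasDerivAt (fun s : ℝ => s * s ^ δ)
        (1 * t ^ δ + t * (δ * t ^ (δ - 1))) t := (hasDerivAt_id t).mul h1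
    have hkey : t * t ^ (δ - 1) = t ^ δ := by
      have h : t ^ δ = t ^ (1 : ℝ) * t ^ (δ - 1) := by
        rw [← Real.rpow_add ht]; norm_num
      rw [h, Real.rpow_one]
    have heq : (1 : ℝ) * t ^ δ + t * (δ * t ^ (δ - 1)) = (1 + δ) * |t| ^ δ := by
      rw [abs_of_pos ht]
      nlinarith [hkey]
    rw [heq] at h2
    refine h2.congr_of_eventuallyEq ?_
    filter_upwards [Ioi_mem_nhds ht] with s hs
    rw [abs_of_pos hs]

lemma continuous_truncPow {L δ : ℝ} (hδ : 0 ≤ δ) : Continuous (truncPow L δ) :=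
  continuous_id.mul ((Real.continuous_rpow_const hδ).comp (continuous_abs.min continuous_const))

lemma truncD_nonneg {L δ t : ℝ} (hδ : 0 ≤ δ) (hL : 0 < L) : 0 ≤ truncD L δ t := by
  unfold truncD
  split
  · positivity
  · positivity

lemma truncD_le {L δ t : ℝ} (hδ : 0 ≤ δ) (hL : 0 < L) : truncD L δ t ≤ (1 + δ) * L ^ δ := by
  unfold truncD
  split
  case isTrue h =>
    have habs : |t| ≤ L := abs_le.2 ⟨h.1, h.2.le⟩
    exact mul_le_mul_of_nonneg_left (Real.rpow_le_rpow (abs_nonneg t) habs hδ) (by linarith)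
  case isFalse h =>
    exact le_mul_of_one_le_left (Real.rpow_nonneg hL.le δ) (by linarith)

lemma measurable_truncD {L δ : ℝ} (hδ : 0 ≤ δ) : Measurable (truncD L δ) := by
  unfold truncD
  have hset : MeasurableSet {a : ℝ | -L ≤ a ∧ a < L} := measurableSet_Ico
  exact Measurable.ite hset
    ((continuous_const.mul ((Real.continuous_rpow_const hδ).comp continuous_abs)).measurable)
    measurable_const

lemma hasDerivWithinAt_truncPow {L δ : ℝ} (hδ : 0 < δ) (hL : 1 < L) (t : ℝ) :
    HasDerivWithinAt (truncPow L δ) (truncD L δ t) (Ioi t) t := by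
  have hL0 : (0 : ℝ) < L := by linarith
  by_cases h1 : L ≤ t
  · -- on Ici L, truncPow s = s * L ^ δ
    have hD : truncD L δ t = L ^ δ := by
      unfold truncD; rw [if_neg]; push_neg; intro _; linarith
    rw [hD]
    have hd : HasDerivAt (fun s : ℝ => s * L ^ δ) (L ^ δ) t := by
      simpa using (hasDerivAt_id t).mul_const (L ^ δ)
    refine hd.hasDerivWithinAt.congr (fun s hs => ?_) ?_
    · have hs' : L ≤ s := le_of_lt (lt_of_le_of_lt h1 hs)
      unfold truncPow
      rw [abs_of_nonneg (by linarith), min_eq_right hs']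
    · unfold truncPow
      rw [abs_of_nonneg (by linarith), min_eq_right h1]
  by_cases h2 : t < -L
  · -- near t, truncPow s = s * L ^ δ
    have hD : truncD L δ t = L ^ δ := by
      unfold truncD; rw [if_neg]; push_neg; intro h; linarith
    rw [hD]
    have hd : HasDerivAt (fun s : ℝ => s * L ^ δ) (L ^ δ) t := by
      simpa using (hasDerivAt_id t).mul_const (L ^ δ)
    refine hd.hasDerivWithinAt.congr_of_eventuallyEq ?_ ?_
    · filter_upwards [nhdsWithin_le_nhds (Iio_mem_nhds h2)] with s hs
      have hs' : s < -L := hs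
      unfold truncPow
      rw [abs_of_neg (by linarith), min_eq_right (by linarith)]
    · unfold truncPow
      rw [abs_of_neg (by linarith), min_eq_right (by linarith)]
  · -- -L ≤ t < L
    push_neg at h1 h2
    have hD : truncD L δ t = (1 + δ) * |t| ^ δ := by
      unfold truncD; rw [if_pos ⟨h2, h1⟩]
    rw [hD]
    have habs : |t| ≤ L := abs_le.2 ⟨h2, h1.le⟩
    refine (hasDerivAt_mul_abs_rpow hδ t).hasDerivWithinAt.congr_of_eventuallyEq ?_ ?_
    · filter_upwards [nhdsWithin_le_nhds (Iio_mem_nhds h1), self_mem_nhdsWithin] with s hs hs'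
      have hs2 : -L ≤ s := le_of_lt (lt_of_le_of_lt h2 hs')
      unfold truncPow
      rw [min_eq_left (abs_le.2 ⟨hs2, hs.le⟩)]
    · unfold truncPow
      rw [min_eq_left habs]

lemma intervalIntegrable_truncD {L δ a b : ℝ} (hδ : 0 ≤ δ) (hL : 0 < L) :
    IntervalIntegrable (truncD L δ) volume b a := by
  refine (_root_.intervalIntegrable_const (c := (1 + δ) * L ^ δ)).mono_fun ((measurable_truncD hδ).aestronglyMeasurable) ?_
  refine Filter.Eventually.of_forall fun t => ?_
  simp only [Real.norm_eq_abs]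
  rw [abs_of_nonneg (truncD_nonneg hδ hL),
    abs_of_nonneg (by positivity : (0:ℝ) ≤ (1 + δ) * L ^ δ)]
  exact truncD_le hδ hL

lemma ftc_truncPow {L δ a b : ℝ} (hδ : 0 < δ) (hL : 1 < L) (hab : b ≤ a) :
    ∫ t in b..a, truncD L δ t = truncPow L δ a - truncPow L δ b :=
  integral_eq_sub_of_hasDeriv_right_of_le hab ((continuous_truncPow hδ.le).continuousOn)
    (fun x _ => hasDerivWithinAt_truncPow hδ hL x) (intervalIntegrable_truncD hδ.le (by linarith))

lemma truncD_pow_le {L γ p t : ℝ} (hγ : 0 < γ) (hp : 1 < p) (hL : 1 < L) :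
    (truncD L γ t) ^ p ≤ (1 + p * γ) ^ (p - 1) * truncD L (p * γ) t := by
  have hL0 : (0:ℝ) < L := by linarith
  have hpγ : 0 < p * γ := by positivity
  unfold truncD
  split
  case isTrue h =>
    have h1 : ((1 + γ) * |t| ^ γ) ^ p = (1 + γ) ^ p * |t| ^ (γ * p) := by
      rw [Real.mul_rpow (by linarith) (Real.rpow_nonneg (abs_nonneg t) γ),
        ← Real.rpow_mul (abs_nonneg t)]
    have h2 : (1 + γ : ℝ) ^ p ≤ (1 + p * γ) ^ (p - 1) * (1 + p * γ) := by
      have ha : (1 + γ : ℝ) ^ p ≤ (1 + p * γ) ^ p :=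
        Real.rpow_le_rpow (by linarith) (by nlinarith) (by linarith)
      have hb : (1 + p * γ : ℝ) ^ p = (1 + p * γ) ^ (p - 1) * (1 + p * γ) := by
        have hc := Real.rpow_add (show (0:ℝ) < 1 + p * γ by linarith) (p - 1) 1
        rw [sub_add_cancel, Real.rpow_one] at hc
        exact hc
      rw [← hb]
      exact ha
    calc ((1 + γ) * |t| ^ γ) ^ p = (1 + γ) ^ p * |t| ^ (γ * p) := h1
      _ ≤ ((1 + p * γ) ^ (p - 1) * (1 + p * γ)) * |t| ^ (γ * p) :=
          mul_le_mul_of_nonneg_right h2 (Real.rpow_nonneg (abs_nonneg t) _)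
      _ = (1 + p * γ) ^ (p - 1) * ((1 + p * γ) * |t| ^ (p * γ)) := by rw [mul_comm γ p]; ring
  case isFalse h =>
    have h1 : (L ^ γ : ℝ) ^ p = L ^ (p * γ) := by
      rw [← Real.rpow_mul hL0.le, mul_comm]
    rw [h1]
    exact le_mul_of_one_le_left (Real.rpow_nonneg hL0.le _)
      (Real.one_le_rpow (by linarith) (by linarith))

lemma holder_step {L γ p a b : ℝ} (hγ : 0 ≤ γ) (hL : 0 < L) (hp : 1 < p) (hab : b ≤ a) :
    (∫ t in b..a, truncD L γ t) ^ p ≤ (a - b) ^ (p - 1) * ∫ t in b..a, (truncD L γ t) ^ p := by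
  set μ := volume.restrict (Ioc b a) with hμ
  haveI : IsFiniteMeasure μ := by
    constructor
    rw [Measure.restrict_apply_univ]
    exact measure_Ioc_lt_top
  have hq := Real.HolderConjugate.conjExponent hp
  set q := Real.conjExponent p with hqdef
  have hmeas := (measurable_truncD (L := L) hγ).aestronglyMeasurable (μ := μ)
  have hmemf : MemLp (truncD L γ) (ENNReal.ofReal p) μ :=
    MemLp.of_bound hmeas ((1 + γ) * L ^ γ) (Filter.Eventually.of_forall fun t => by
      rw [Real.norm_eq_abs, abs_of_nonneg (truncD_nonneg hγ hL)]; exact truncD_le hγ hL)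
  have hmemg : MemLp (fun _ : ℝ => (1:ℝ)) (ENNReal.ofReal q) μ := memLp_const 1
  have hH := MeasureTheory.integral_mul_le_Lp_mul_Lq_of_nonneg hq
    (Filter.Eventually.of_forall fun t => truncD_nonneg hγ hL)
    (Filter.Eventually.of_forall fun _ => zero_le_one) hmemf hmemg
  simp only [mul_one, Real.one_rpow] at hH
  have hvol : ∫ _ : ℝ, (1:ℝ) ∂μ = a - b := by
    rw [hμ, setIntegral_const, Real.volume_real_Ioc_of_le hab, smul_eq_mul, mul_one]
  rw [hvol] at hH
  -- hH : ∫ f ∂μ ≤ (∫ f^p ∂μ)^(1/p) * (a-b)^(1/q)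
  have hint1 : ∫ t in b..a, truncD L γ t = ∫ t, truncD L γ t ∂μ := integral_of_le hab
  have hint2 : ∫ t in b..a, (truncD L γ t) ^ p = ∫ t, (truncD L γ t) ^ p ∂μ := integral_of_le hab
  rw [hint1, hint2]
  have hX : 0 ≤ ∫ t, truncD L γ t ∂μ :=
    integral_nonneg fun t => truncD_nonneg hγ hL
  have hY : 0 ≤ ∫ t, (truncD L γ t) ^ p ∂μ :=
    integral_nonneg fun t => Real.rpow_nonneg (truncD_nonneg hγ hL) p
  calc (∫ t, truncD L γ t ∂μ) ^ p
      ≤ ((∫ t, (truncD L γ t) ^ p ∂μ) ^ (1/p) * (a - b) ^ (1/q)) ^ p :=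
        Real.rpow_le_rpow hX hH (by linarith)
    _ = (a - b) ^ (p - 1) * ∫ t, (truncD L γ t) ^ p ∂μ := by
        rw [Real.mul_rpow (Real.rpow_nonneg hY _) (Real.rpow_nonneg (by linarith) _),
          ← Real.rpow_mul hY, ← Real.rpow_mul (by linarith : (0:ℝ) ≤ a - b)]
        rw [one_div_mul_cancel (by linarith : p ≠ 0), Real.rpow_one]
        have : 1 / q * p = p - 1 := by
          rw [mul_comm, ← div_eq_mul_one_div]
          exact hq.div_conj_eq_sub_one
        rw [this, mul_comm]

lemma key_ineq {p : ℝ} (hp : 1 < p) {a b γ L : ℝ} (hγ : 0 < γ) (hL : 1 < L) (hba : b < a) :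
    |truncPow L γ a - truncPow L γ b| ^ p ≤
      (1 + p * γ) ^ (p - 1) *
        (|a - b| ^ (p - 2) * (a - b) * (truncPow L (p * γ) a - truncPow L (p * γ) b)) := by
  have hL0 : (0:ℝ) < L := by linarith
  have hpγ : 0 < p * γ := by positivity
  have hab : b ≤ a := hba.le
  have hF := ftc_truncPow (δ := γ) hγ hL (a := a) (b := b) hab
  have hG := ftc_truncPow (δ := p * γ) hpγ hL (a := a) (b := b) hab
  have hXnn : 0 ≤ ∫ t in b..a, truncD L γ t :=
    intervalIntegral.integral_nonneg hab fun x _ => truncD_nonneg hγ.le hL0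
  -- interval integrability of (truncD L γ)^p
  have hint1 : IntervalIntegrable (fun t => (truncD L γ t) ^ p) volume b a := by
    refine (_root_.intervalIntegrable_const (c := ((1 + γ) * L ^ γ) ^ p)).mono_fun
      (((Real.continuous_rpow_const (by linarith : (0:ℝ) ≤ p)).measurable.comp
        (measurable_truncD hγ.le)).aestronglyMeasurable) ?_
    refine Filter.Eventually.of_forall fun t => ?_
    simp only [Real.norm_eq_abs, Function.comp]
    rw [abs_of_nonneg (Real.rpow_nonneg (truncD_nonneg hγ.le hL0) p),
      abs_of_nonneg (Real.rpow_nonneg (by positivity) p)]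
    exact Real.rpow_le_rpow (truncD_nonneg hγ.le hL0) (truncD_le hγ.le hL0) (by linarith)
  have hint2 : IntervalIntegrable (fun t => (1 + p * γ) ^ (p - 1) * truncD L (p * γ) t)
      volume b a := (intervalIntegrable_truncD hpγ.le hL0).const_mul _
  have hmono : ∫ t in b..a, (truncD L γ t) ^ p ≤
      (1 + p * γ) ^ (p - 1) * ∫ t in b..a, truncD L (p * γ) t := by
    calc ∫ t in b..a, (truncD L γ t) ^ p
        ≤ ∫ t in b..a, (1 + p * γ) ^ (p - 1) * truncD L (p * γ) t :=
          intervalIntegral.integral_mono_on hab hint1 hint2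
            fun x _ => truncD_pow_le hγ hp hL
      _ = (1 + p * γ) ^ (p - 1) * ∫ t in b..a, truncD L (p * γ) t :=
          intervalIntegral.integral_const_mul _ _
  have habs : |truncPow L γ a - truncPow L γ b| = ∫ t in b..a, truncD L γ t := by
    rw [← hF, abs_of_nonneg hXnn]
  have hrhs : |a - b| ^ (p - 2) * (a - b) = (a - b) ^ (p - 1) := by
    have hpos : (0:ℝ) < a - b := by linarith
    rw [abs_of_pos hpos]
    have h := Real.rpow_add hpos (p - 2) 1
    rw [show p - 2 + 1 = p - 1 by ring, Real.rpow_one] at h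
    rw [h]
  rw [habs, hrhs]
  calc (∫ t in b..a, truncD L γ t) ^ p
      ≤ (a - b) ^ (p - 1) * ∫ t in b..a, (truncD L γ t) ^ p :=
        holder_step hγ.le hL0 hp hab
    _ ≤ (a - b) ^ (p - 1) * ((1 + p * γ) ^ (p - 1) * ∫ t in b..a, truncD L (p * γ) t) :=
        mul_le_mul_of_nonneg_left hmono (Real.rpow_nonneg (by linarith) _)
    _ = (1 + p * γ) ^ (p - 1) *
        ((a - b) ^ (p - 1) * (truncPow L (p * γ) a - truncPow L (p * γ) b)) := by
        rw [hG]; ring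

theorem trunc_power_ineq (p : ℝ) (hp : 1 < p) :
    ∃ C > 0, ∀ (a b γ L : ℝ), 0 < γ → 1 < L →
      |truncPow L γ a - truncPow L γ b| ^ p ≤
        C * (1 + p * γ) ^ (p - 1) *
          (|a - b| ^ (p - 2) * (a - b) * (truncPow L (p * γ) a - truncPow L (p * γ) b)) := by
  refine ⟨1, one_pos, fun a b γ L hγ hL => ?_⟩
  rw [one_mul]
  rcases lt_trichotomy b a with hba | rfl | hba
  · exact key_ineq hp hγ hL hba
  · simp [sub_self, abs_zero, Real.zero_rpow (by linarith : p ≠ 0)]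
  · have h2 := key_ineq hp hγ hL hba
    have e1 : |truncPow L γ a - truncPow L γ b| = |truncPow L γ b - truncPow L γ a| :=
      abs_sub_comm _ _
    have e2 : |a - b| ^ (p - 2) * (a - b) * (truncPow L (p * γ) a - truncPow L (p * γ) b) =
        |b - a| ^ (p - 2) * (b - a) * (truncPow L (p * γ) b - truncPow L (p * γ) a) := by
      rw [abs_sub_comm]; ring
    rw [e1, e2]
    exact h2
end

section
/- Let 1 < p < q < r, and let x_j, y_j, z_j, w_j ≥ 0 be sequences and λ ≥ 0, c ∈ ℝ such that (1/p)x_j − (λ/p)y_j − (1/q)z_j − (1/r)w_j = c + o(1) and x_j − λ y_j − z_j − w_j = o(1 + x_j^{1/p}). If moreover y_j ≤ C w_j^{p/r} for a constant C ≥ 0, then the sequence x_j is bounded. -/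
open Filter

lemma young_aux (θ ε : ℝ) (hθ0 : 0 < θ) (hθ1 : θ < 1) (hε : 0 < ε) :
    ∃ K : ℝ, 0 ≤ K ∧ ∀ t : ℝ, 0 ≤ t → t ^ θ ≤ ε * t + K := by
  set T : ℝ := ε ^ (1 / (θ - 1)) with hTdef
  have hT : 0 < T := Real.rpow_pos_of_pos hε _
  have hTe : T ^ (θ - 1) = ε := by
    rw [hTdef, ← Real.rpow_mul hε.le, one_div,
      inv_mul_cancel₀ (by linarith : θ - 1 ≠ 0), Real.rpow_one]
  refine ⟨T ^ θ, Real.rpow_nonneg hT.le _, fun t ht => ?_⟩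
  rcases le_or_gt t T with h | h
  · have h1 : t ^ θ ≤ T ^ θ := Real.rpow_le_rpow ht h hθ0.le
    nlinarith [mul_nonneg hε.le ht]
  · have ht0 : 0 < t := hT.trans h
    have h1 : t ^ θ = t * t ^ (θ - 1) := by
      rw [show θ = 1 + (θ - 1) by ring, Real.rpow_add ht0, Real.rpow_one]; ring_nf
    have h2 : t ^ (θ - 1) ≤ T ^ (θ - 1) :=
      Real.rpow_le_rpow_of_nonpos hT h.le (by linarith)
    have h3 : t * t ^ (θ - 1) ≤ t * ε := by
      rw [← hTe]; exact mul_le_mul_of_nonneg_left h2 ht0.le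
    have h4 : 0 ≤ T ^ θ := Real.rpow_nonneg hT.le _
    nlinarith

lemma bdd_of_tendsto (f : ℕ → ℝ) (a : ℝ) (h : Tendsto f atTop (nhds a)) :
    ∃ B : ℝ, 0 ≤ B ∧ ∀ j, |f j| ≤ B := by
  have habs : Tendsto (fun j => |f j|) atTop (nhds |a|) := h.abs
  obtain ⟨B, hB⟩ := habs.bddAbove_range
  exact ⟨B, (abs_nonneg (f 0)).trans (hB (Set.mem_range_self 0)),
    fun j => hB (Set.mem_range_self j)⟩

lemma assemble (ip iq ir lp bq lam C B1 B2 e s u K1 K2 ε1 ε2 N xj yj zj wj : ℝ)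
    (keyj : (ip - iq) * (xj - lam * yj) + (iq - ir) * wj
        = (ip * xj - lp * yj - iq * zj - ir * wj) - iq * (e * (1 + s)))
    (hAj : ip * xj - lp * yj - iq * zj - ir * wj ≤ B1)
    (HE : iq * ((-e) * (1 + s)) ≤ bq * (1 + s))
    (Hy : (ip - iq) * lam * yj ≤ (ip - iq) * lam * (C * u))
    (Hu : (ip - iq) * lam * C * u ≤ (ip - iq) * lam * C * (ε1 * wj + K1))
    (Hu2 : ((ip - iq) * lam * C * ε1) * wj ≤ (iq - ir) * wj)
    (Hs : bq * s ≤ bq * (ε2 * xj + K2))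
    (Hs2 : (bq * ε2) * xj ≤ ((ip - iq) / 2) * xj)
    (hN : N = B1 + bq + bq * K2 + (ip - iq) * lam * C * K1) :
    ((ip - iq) / 2) * xj ≤ N := by linarith

theorem PS_boundedness (p q r lam c C : ℝ) (x y z w : ℕ → ℝ)
    (hp : 1 < p) (hpq : p < q) (hqr : q < r) (hlam : 0 ≤ lam) (hC : 0 ≤ C)
    (hx : ∀ j, 0 ≤ x j) (hy : ∀ j, 0 ≤ y j) (hz : ∀ j, 0 ≤ z j) (hw : ∀ j, 0 ≤ w j)
    (h1 : Tendsto (fun j => (1 / p) * x j - (lam / p) * y j - (1 / q) * z j - (1 / r) * w j)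
      atTop (nhds c))
    (h2 : ∃ e : ℕ → ℝ, Tendsto e atTop (nhds 0) ∧
      ∀ j, x j - lam * y j - z j - w j = e j * (1 + (x j) ^ (1 / p)))
    (h3 : ∀ j, y j ≤ C * (w j) ^ (p / r)) :
    ∃ M : ℝ, ∀ j, x j ≤ M := by
  obtain ⟨e, he0, he⟩ := h2
  have hp0 : (0:ℝ) < p := by linarith
  have hq0 : (0:ℝ) < q := by linarith
  have hr0 : (0:ℝ) < r := by linarith
  have ha : 0 < 1/p - 1/q := by
    have := one_div_lt_one_div_of_lt hp0 hpq; linarith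
  have hb : 0 < 1/q - 1/r := by
    have := one_div_lt_one_div_of_lt hq0 hqr; linarith
  obtain ⟨B1, hB1nn, hB1⟩ := bdd_of_tendsto _ _ h1
  obtain ⟨B2, hB2nn, hB2⟩ := bdd_of_tendsto _ _ he0
  have hSnn : 0 ≤ (1/p - 1/q) * lam * C := by positivity
  obtain ⟨ε1, hε1pos, hε1le⟩ :
      ∃ ε1 : ℝ, 0 < ε1 ∧ (1/p - 1/q) * lam * C * ε1 ≤ 1/q - 1/r := by
    refine ⟨(1/q - 1/r) / ((1/p - 1/q) * lam * C + 1), by positivity, ?_⟩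
    rw [mul_div_assoc', div_le_iff₀ (by linarith)]
    nlinarith
  obtain ⟨K1, hK1nn, hK1⟩ := young_aux (p/r) ε1 (by positivity)
    ((div_lt_one hr0).mpr (by linarith)) hε1pos
  obtain ⟨ε2, hε2pos, hε2le⟩ :
      ∃ ε2 : ℝ, 0 < ε2 ∧ (B2 / q) * ε2 ≤ (1/p - 1/q) / 2 := by
    refine ⟨((1/p - 1/q) * q) / (2 * (B2 + 1)), by positivity, ?_⟩
    rw [mul_div_assoc', div_le_iff₀ (by linarith)]
    have key : B2 / q * ((1/p - 1/q) * q) = B2 * (1/p - 1/q) := by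
      field_simp
    rw [key]
    nlinarith
  obtain ⟨K2, hK2nn, hK2⟩ := young_aux (1/p) ε2 (by positivity)
    ((div_lt_one hp0).mpr hp) hε2pos
  set N : ℝ := B1 + B2/q + (B2/q) * K2 + (1/p - 1/q) * lam * C * K1 with hN
  refine ⟨2 * N / (1/p - 1/q), fun j => ?_⟩
  have hs : 0 ≤ x j ^ (1/p) := Real.rpow_nonneg (hx j) _
  have keyj : (1/p - 1/q) * (x j - lam * y j) + (1/q - 1/r) * w j
      = ((1/p) * x j - (lam/p) * y j - (1/q) * z j - (1/r) * w j)
        - (1/q) * (e j * (1 + x j ^ (1/p))) := by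
    linear_combination (-(1/q)) * he j
  have hAj : (1/p) * x j - (lam/p) * y j - (1/q) * z j - (1/r) * w j ≤ B1 :=
    (le_abs_self _).trans (by simpa using hB1 j)
  have hej : -(e j) ≤ B2 := (neg_le_abs _).trans (hB2 j)
  have HE : (1/q) * ((-(e j)) * (1 + x j ^ (1/p))) ≤ (B2/q) * (1 + x j ^ (1/p)) := by
    calc (1/q) * ((-(e j)) * (1 + x j ^ (1/p)))
        ≤ (1/q) * (B2 * (1 + x j ^ (1/p))) := by
          exact mul_le_mul_of_nonneg_left
            (mul_le_mul_of_nonneg_right hej (by linarith)) (by positivity)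
      _ = (B2/q) * (1 + x j ^ (1/p)) := by ring
  have Hy : (1/p - 1/q) * lam * y j ≤ (1/p - 1/q) * lam * (C * w j ^ (p/r)) :=
    mul_le_mul_of_nonneg_left (h3 j) (by positivity)
  have Hu : (1/p - 1/q) * lam * C * (w j ^ (p/r))
      ≤ (1/p - 1/q) * lam * C * (ε1 * w j + K1) :=
    mul_le_mul_of_nonneg_left (hK1 _ (hw j)) hSnn
  have Hu2 : ((1/p - 1/q) * lam * C * ε1) * w j ≤ (1/q - 1/r) * w j :=
    mul_le_mul_of_nonneg_right hε1le (hw j)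
  have Hs : (B2/q) * (x j ^ (1/p)) ≤ (B2/q) * (ε2 * x j + K2) :=
    mul_le_mul_of_nonneg_left (hK2 _ (hx j)) (by positivity)
  have Hs2 : ((B2/q) * ε2) * x j ≤ ((1/p - 1/q) / 2) * x j :=
    mul_le_mul_of_nonneg_right hε2le (hx j)
  have hhalf : ((1/p - 1/q) / 2) * x j ≤ N :=
    assemble (1/p) (1/q) (1/r) (lam/p) (B2/q) lam C B1 B2 (e j) (x j ^ (1/p))
      (w j ^ (p/r)) K1 K2 ε1 ε2 N (x j) (y j) (z j) (w j)
      keyj hAj HE Hy Hu Hu2 Hs Hs2 hN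
  rw [le_div_iff₀ (by linarith : (0:ℝ) < 1/p - 1/q)]
  linarith
end
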